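/- Let p ∈ (1,∞), M ∈ ℝ^{m×d}, λ > 0, and let {λ_j} be a sequence of positive reals with λ/2 ≤ λ_j ≤ 2λ for all j. Let {u_j} ⊂ L^p_loc(ℝ^d;ℝ^m) with u_j(x) - Mx Q₁-periodic, ∫_{Q₁} u_j dx = 0, and suppose S := sup_j ∫_{Q_{2/λ}} ∫_{Q₁} |(u_j(x+λ_j ξ)-u_j(x))/λ_j|^p dx dξ < ∞, where Q_r = (0,r)^d. Then sup_j ∫_{Q₁} |u_j(x)|^p dx ≤ 2^{p-1}((2λ)^{d+p} S + d^{p/2}|M|^p) < ∞. -/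

import Mathlib

/-!
Because `u - M` is `ℤ^d`-periodic and `u` has mean zero on `Q₁`, averaging translates gives
`∫_{Q₁} u (x + ξ) dξ = M x`. Hence `u x - M x` is the average over `ξ ∈ Q₁` of `u x - u (x + ξ)`,
and Jensen bounds `∫_{Q₁} |u - M|^p` by the double integral of `|u (x + ξ) - u x|^p` over
`Q₁ × Q₁`. The substitution `ξ = λ_j η` turns the latter into `λ_j^(d+p)` times the energy over
`η ∈ Q_{1/λ_j} ⊆ Q_{2/λ}`, while `|M x| ≤ √d |M|` on `Q₁`.
-/

open MeasureTheory Set Pointwise Bornology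

section RpowInequalities

variable {α F : Type*} [MeasurableSpace α] {μ : Measure α} [NormedAddCommGroup F] {p : ℝ}

theorem norm_add_rpow_le (hp : 1 ≤ p) (a b : F) :
    ‖a + b‖ ^ p ≤ 2 ^ (p - 1) * (‖a‖ ^ p + ‖b‖ ^ p) :=
  calc ‖a + b‖ ^ p ≤ (‖a‖ + ‖b‖) ^ p := by gcongr; exact norm_add_le a b
    _ ≤ 2 ^ (p - 1) * (‖a‖ ^ p + ‖b‖ ^ p) := by
      exact_mod_cast NNReal.rpow_add_le_mul_rpow_add_rpow ‖a‖₊ ‖b‖₊ hp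

theorem norm_sub_rpow_le (hp : 1 ≤ p) (a b : F) :
    ‖a - b‖ ^ p ≤ 2 ^ (p - 1) * (‖a‖ ^ p + ‖b‖ ^ p) := by
  simpa only [sub_eq_add_neg, norm_neg] using norm_add_rpow_le hp a (-b)

theorem MeasureTheory.Integrable.norm_sub_rpow {f g : α → F}
    (hfp : Integrable (fun x => ‖f x‖ ^ p) μ) (hp : 1 ≤ p) (hf : AEStronglyMeasurable f μ)
    (hg : AEStronglyMeasurable g μ) (hgp : Integrable (fun x => ‖g x‖ ^ p) μ) :
    Integrable (fun x => ‖f x - g x‖ ^ p) μ :=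
  ((hfp.add hgp).const_mul _).mono'
    ((Real.continuous_rpow_const (by linarith)).comp_aestronglyMeasurable (hf.sub hg).norm)
    (ae_of_all _ fun x => by
      rw [Real.norm_of_nonneg (by positivity)]
      exact norm_sub_rpow_le hp (f x) (g x))

theorem integral_norm_add_rpow_le {f g : α → F} (hp : 1 ≤ p)
    (hfp : Integrable (fun x => ‖f x‖ ^ p) μ) (hgp : Integrable (fun x => ‖g x‖ ^ p) μ) :
    ∫ x, ‖f x + g x‖ ^ p ∂μ ≤ 2 ^ (p - 1) * (∫ x, ‖f x‖ ^ p ∂μ + ∫ x, ‖g x‖ ^ p ∂μ) := by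
  rw [← integral_add hfp hgp, ← integral_const_mul]
  exact integral_mono_of_nonneg (ae_of_all _ fun _ => by positivity) ((hfp.add hgp).const_mul _)
    (ae_of_all _ fun x => norm_add_rpow_le hp (f x) (g x))

theorem norm_integral_rpow_le [NormedSpace ℝ F] [IsProbabilityMeasure μ] {f : α → F} (hp : 1 ≤ p)
    (hf : Integrable f μ) (hfp : Integrable (fun x => ‖f x‖ ^ p) μ) :
    ‖∫ x, f x ∂μ‖ ^ p ≤ ∫ x, ‖f x‖ ^ p ∂μ :=
  calc ‖∫ x, f x ∂μ‖ ^ p ≤ (∫ x, ‖f x‖ ∂μ) ^ p := by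
        gcongr
        exact norm_integral_le_integral_norm f
    _ ≤ ∫ x, ‖f x‖ ^ p ∂μ :=
        (convexOn_rpow hp).map_integral_le (Real.continuous_rpow_const (by linarith)).continuousOn
          isClosed_Ici (ae_of_all _ fun x => norm_nonneg (f x)) hf.norm hfp

end RpowInequalities

section LocallyIntegrable

variable {X F : Type*} [MeasurableSpace X] {μ : Measure X} [NormedAddCommGroup F]

theorem MeasureTheory.LocallyIntegrable.integrableOn_of_isBounded [PseudoMetricSpace X]
    [ProperSpace X] {f : X → F} (hf : LocallyIntegrable f μ) {s : Set X} (hs : IsBounded s) :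
    IntegrableOn f s μ :=
  (hf.integrableOn_isCompact hs.isCompact_closure).mono_set subset_closure

theorem MeasureTheory.LocallyIntegrable.of_norm_rpow [TopologicalSpace X]
    [OpensMeasurableSpace X] [IsLocallyFiniteMeasure μ] {p : ℝ} {v : X → F} (hp : 1 ≤ p)
    (hv : AEStronglyMeasurable v μ)
    (h : LocallyIntegrable (fun x => ‖v x‖ ^ p) μ) : LocallyIntegrable v μ :=
  ((locallyIntegrable_const 1).add h).mono hv (ae_of_all _ fun x => by
    rw [Pi.add_apply, Real.norm_of_nonneg (by positivity)]
    rcases le_total ‖v x‖ 1 with h1 | h1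
    · linarith [Real.rpow_nonneg (norm_nonneg (v x)) p]
    · linarith [Real.self_le_rpow_of_one_le h1 hp])

end LocallyIntegrable

section Translation

variable {G F : Type*} [AddGroup G] [MeasurableSpace G] [MeasurableAdd G] (μ : Measure G)

def aePeriods [μ.IsAddRightInvariant] (V : G → F) : AddSubgroup G where
  carrier := {c | ∀ᵐ y ∂μ, V (y + c) = V y}
  zero_mem' := by simp
  add_mem' {c c'} hc hc' := by
    show ∀ᵐ y ∂μ, V (y + (c + c')) = V y
    have hc_shift : ∀ᵐ y ∂μ, V (y + c + c') = V (y + c) :=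
      (measurePreserving_add_right μ c).quasiMeasurePreserving.ae hc'
    filter_upwards [hc_shift, hc] with y h h'
    rw [← add_assoc, h, h']
  neg_mem' {c} hc := by
    have hc_shift : ∀ᵐ y ∂μ, V (y + -c + c) = V (y + -c) :=
      (measurePreserving_add_right μ (-c)).quasiMeasurePreserving.ae hc
    filter_upwards [hc_shift] with y h
    rw [neg_add_cancel_right] at h
    exact h.symm

variable {μ} [μ.IsAddLeftInvariant] [NormedAddCommGroup F]

theorem setIntegral_comp_add_left [NormedSpace ℝ F] (f : G → F) (c : G) (s : Set G) :
    ∫ x in s, f (c + x) ∂μ = ∫ y in c +ᵥ s, f y ∂μ := by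
  simp only [← image_vadd, vadd_eq_add]
  exact ((measurePreserving_add_left μ c).setIntegral_image_emb
    (measurableEmbedding_addLeft c) f s).symm

theorem integrableOn_comp_add_left_iff {f : G → F} {c : G} {s : Set G} :
    IntegrableOn (fun x => f (c + x)) s μ ↔ IntegrableOn f (c +ᵥ s) μ := by
  simp only [← image_vadd, vadd_eq_add]
  exact ((measurePreserving_add_left μ c).integrableOn_image
    (measurableEmbedding_addLeft c)).symm

end Translation

section FundamentalDomain

variable {ι E F : Type*} [Fintype ι] [NormedAddCommGroup E] [NormedSpace ℝ E]
  [MeasurableSpace E] [BorelSpace E] [NormedAddCommGroup F] [NormedSpace ℝ F]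
  {μ : Measure E} [μ.IsAddLeftInvariant]

theorem setIntegral_vadd_fundamentalDomain (b : Module.Basis ι ℝ E) {V : E → F}
    (hV : ∀ i, b i ∈ aePeriods μ V) (x : E) :
    ∫ y in x +ᵥ ZSpan.fundamentalDomain b, V y ∂μ = ∫ y in ZSpan.fundamentalDomain b, V y ∂μ := by
  have hL : (Submodule.span ℤ (range b)).toAddSubgroup ≤ aePeriods μ V := by
    rw [Submodule.span_int_eq_addSubgroupClosure, AddSubgroup.closure_le]
    rintro _ ⟨i, rfl⟩
    exact hV i
  have hae : ∀ᵐ y ∂μ, ∀ c : Submodule.span ℤ (range b), V (y + c) = V y :=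
    ae_all_iff.2 fun c => hL c.2
  -- `V ∘ fract` is invariant under the whole lattice and agrees with `V` almost everywhere.
  have hfract : (fun y => V (ZSpan.fract b y)) =ᵐ[μ] V := by
    filter_upwards [hae] with y hy
    rw [ZSpan.fract_apply, sub_eq_add_neg]
    exact hy (-ZSpan.floor b y)
  have : Countable (Submodule.span ℤ (range b)).toAddSubgroup :=
    inferInstanceAs (Countable (Submodule.span ℤ (range b)))
  have hD := ZSpan.isAddFundamentalDomain' b μ
  calc ∫ y in x +ᵥ ZSpan.fundamentalDomain b, V y ∂μ
      = ∫ y in x +ᵥ ZSpan.fundamentalDomain b, V (ZSpan.fract b y) ∂μ :=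
        integral_congr_ae (ae_restrict_of_ae hfract.symm)
    _ = ∫ y in ZSpan.fundamentalDomain b, V (ZSpan.fract b y) ∂μ :=
        (hD.vadd_of_comm x).setIntegral_eq hD fun g y =>
          congrArg V (ZSpan.fract_zSpan_add b y g.2)
    _ = ∫ y in ZSpan.fundamentalDomain b, V y ∂μ := integral_congr_ae (ae_restrict_of_ae hfract)

end FundamentalDomain

def cube (d : ℕ) (r : ℝ) : Set (EuclideanSpace ℝ (Fin d)) := {x | ∀ i, x i ∈ Ioo 0 r}

section Cube

variable {d : ℕ} {r t : ℝ}

theorem cube_eq_preimage_ofLp : cube d r = WithLp.ofLp ⁻¹' univ.pi fun _ => Ioo 0 r := by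
  ext x
  simp [cube]

theorem measurableSet_cube : MeasurableSet (cube d r) := by
  rw [cube_eq_preimage_ofLp]
  exact (MeasurableSet.univ_pi fun _ => measurableSet_Ioo).preimage
    (PiLp.volume_preserving_ofLp _).measurable

theorem volume_cube_one : volume (cube d 1) = 1 := by
  rw [cube_eq_preimage_ofLp, (PiLp.volume_preserving_ofLp _).measure_preimage
    (MeasurableSet.univ_pi fun _ => measurableSet_Ioo).nullMeasurableSet, Real.volume_pi_Ioo]
  simp

instance : IsProbabilityMeasure (volume.restrict (cube d 1)) :=
  ⟨by rw [Measure.restrict_apply_univ, volume_cube_one]⟩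

theorem norm_le_of_mem_cube {x : EuclideanSpace ℝ (Fin d)} (hx : x ∈ cube d r) :
    ‖x‖ ≤ √d * r := by
  rcases Nat.eq_zero_or_pos d with rfl | hd
  · simp [Subsingleton.elim x 0]
  have hr : 0 < r := (hx ⟨0, hd⟩).1.trans (hx ⟨0, hd⟩).2
  rw [EuclideanSpace.norm_eq, ← Real.sqrt_sq hr.le, ← Real.sqrt_mul (Nat.cast_nonneg _)]
  gcongr
  calc ∑ i, ‖x i‖ ^ 2 ≤ ∑ _i : Fin d, r ^ 2 := by
        gcongr with i
        rw [Real.norm_of_nonneg (hx i).1.le]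
        exact (hx i).2.le
    _ = d * r ^ 2 := by simp

theorem isBounded_cube : IsBounded (cube d r) :=
  (Metric.isBounded_closedBall (x := 0) (r := √d * r)).subset fun _ hx =>
    mem_closedBall_zero_iff.2 (norm_le_of_mem_cube hx)

theorem smul_cube (ht : 0 < t) : t • cube d r = cube d (t * r) := by
  ext x
  simp only [mem_smul_set_iff_inv_smul_mem₀ ht.ne', cube, mem_ofPred_eq, PiLp.smul_apply,
    smul_eq_mul, mem_Ioo, inv_mul_lt_iff₀ ht, mul_pos_iff_of_pos_left (inv_pos.2 ht)]

theorem cube_mono : Monotone (cube d) := fun _ _ h _ hx i => ⟨(hx i).1, (hx i).2.trans_le h⟩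

theorem cube_one_ae_eq_fundamentalDomain :
    cube d 1 =ᵐ[volume] ZSpan.fundamentalDomain (EuclideanSpace.basisFun (Fin d) ℝ).toBasis := by
  have : ZSpan.fundamentalDomain (EuclideanSpace.basisFun (Fin d) ℝ).toBasis
      = WithLp.ofLp ⁻¹' univ.pi fun _ => Ico 0 1 := by
    ext x
    simp [ZSpan.fundamentalDomain]
  rw [cube_eq_preimage_ofLp, this]
  exact (PiLp.volume_preserving_ofLp _).quasiMeasurePreserving.preimage_ae_eq
    (Measure.ae_eq_set_pi fun _ _ => Ioo_ae_eq_Ico)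

end Cube

section DifferenceKernel

variable {E F : Type*} [NormedAddCommGroup E] [NormedSpace ℝ E] [FiniteDimensional ℝ E]
  [MeasurableSpace E] [BorelSpace E] {μ : Measure E} [μ.IsAddHaarMeasure] [NormedAddCommGroup F]
  {p : ℝ} {v : E → F} {s : Set E}

theorem MeasureTheory.LocallyIntegrable.integrableOn_comp_add_left {f : E → F}
    (hf : LocallyIntegrable f μ) (c : E) (hs : IsBounded s) :
    IntegrableOn (fun x => f (c + x)) s μ :=
  integrableOn_comp_add_left_iff.2 (hf.integrableOn_of_isBounded (hs.vadd c))

theorem integrableOn_norm_sub_rpow_comp_add (hv : StronglyMeasurable v) (hp : 1 ≤ p)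
    (hloc : LocallyIntegrable (fun x => ‖v x‖ ^ p) μ) (hs : IsBounded s) (ξ : E) :
    IntegrableOn (fun x => ‖v (x + ξ) - v x‖ ^ p) s μ := by
  have htr : IntegrableOn (fun x => ‖v (x + ξ)‖ ^ p) s μ := by
    simpa only [add_comm ξ] using hloc.integrableOn_comp_add_left ξ hs
  exact htr.norm_sub_rpow hp (hv.comp_measurable (measurable_add_const ξ)).aestronglyMeasurable
    hv.aestronglyMeasurable (hloc.integrableOn_of_isBounded hs)

theorem integral_norm_sub_rpow_comp_add_le (hp : 1 ≤ p)
    (hloc : LocallyIntegrable (fun x => ‖v x‖ ^ p) μ) (hs : IsBounded s) {A : Set E}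
    (hA : IsBounded A) {ξ : E} (hξ : ξ ∈ A) :
    ∫ x in s, ‖v (x + ξ) - v x‖ ^ p ∂μ
      ≤ 2 ^ (p - 1) * (∫ y in A + s, ‖v y‖ ^ p ∂μ + ∫ x in s, ‖v x‖ ^ p ∂μ) := by
  have htr : IntegrableOn (fun x => ‖v (ξ + x)‖ ^ p) s μ := hloc.integrableOn_comp_add_left ξ hs
  have hvs : IntegrableOn (fun x => ‖v x‖ ^ p) s μ := hloc.integrableOn_of_isBounded hs
  calc ∫ x in s, ‖v (x + ξ) - v x‖ ^ p ∂μ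
      ≤ ∫ x in s, 2 ^ (p - 1) * (‖v (ξ + x)‖ ^ p + ‖v x‖ ^ p) ∂μ :=
        integral_mono_of_nonneg (ae_of_all _ fun _ => by positivity) ((htr.add hvs).const_mul _)
          (ae_of_all _ fun x => by
            show _ ≤ _ * (‖v (ξ + x)‖ ^ p + _)
            rw [add_comm ξ]
            exact norm_sub_rpow_le hp _ _)
    _ = 2 ^ (p - 1) * (∫ x in s, ‖v (ξ + x)‖ ^ p ∂μ + ∫ x in s, ‖v x‖ ^ p ∂μ) := by
        rw [integral_const_mul, integral_add htr hvs]
    _ ≤ 2 ^ (p - 1) * (∫ y in A + s, ‖v y‖ ^ p ∂μ + ∫ x in s, ‖v x‖ ^ p ∂μ) := by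
        rw [setIntegral_comp_add_left (fun y => ‖v y‖ ^ p)]
        gcongr 2 ^ (p - 1) * (?_ + _)
        exact setIntegral_mono_set (hloc.integrableOn_of_isBounded (hA.add hs))
          (ae_of_all _ fun _ => by positivity) (vadd_set_subset_add hξ).eventuallyLE

theorem stronglyMeasurable_norm_sub_rpow_prod (hv : StronglyMeasurable v) (hp : 0 ≤ p) :
    StronglyMeasurable fun q : E × E => ‖v (q.1 + q.2) - v q.1‖ ^ p :=
  (Real.continuous_rpow_const hp).comp_stronglyMeasurable
    ((hv.comp_measurable measurable_add).sub (hv.comp_measurable measurable_fst)).norm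

theorem integrable_norm_sub_rpow_prod (hv : StronglyMeasurable v) (hp : 1 ≤ p)
    (hloc : LocallyIntegrable (fun x => ‖v x‖ ^ p) μ) (hs : IsBounded s) {t : Set E}
    (ht : IsBounded t) (htm : MeasurableSet t) :
    Integrable (fun q : E × E => ‖v (q.1 + q.2) - v q.1‖ ^ p)
      ((μ.restrict s).prod (μ.restrict t)) := by
  have hmeas := stronglyMeasurable_norm_sub_rpow_prod hv (p := p) (by linarith)
  refine (integrable_prod_iff' hmeas.aestronglyMeasurable).2
    ⟨ae_of_all _ (integrableOn_norm_sub_rpow_comp_add hv hp hloc hs), ?_⟩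
  refine Measure.integrableOn_of_bounded (M := 2 ^ (p - 1) *
      (∫ y in t + s, ‖v y‖ ^ p ∂μ + ∫ x in s, ‖v x‖ ^ p ∂μ)) ht.measure_lt_top.ne
    hmeas.norm.integral_prod_left'.aestronglyMeasurable
    (ae_restrict_of_forall_mem htm fun ξ hξ => ?_)
  have hnorm : ∀ x, ‖‖v (x + ξ) - v x‖ ^ p‖ = ‖v (x + ξ) - v x‖ ^ p := fun x =>
    Real.norm_of_nonneg (by positivity)
  simp only [hnorm]
  rw [Real.norm_of_nonneg (integral_nonneg fun _ => by positivity)]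
  exact integral_norm_sub_rpow_comp_add_le hp hloc hs ht hξ

end DifferenceKernel

section Poincare

variable {d : ℕ} {F : Type*} [NormedAddCommGroup F] [NormedSpace ℝ F] {p : ℝ}
  {v : EuclideanSpace ℝ (Fin d) → F} {M : EuclideanSpace ℝ (Fin d) →L[ℝ] F}

theorem setIntegral_cube_one_comp_add {V : EuclideanSpace ℝ (Fin d) → F}
    (hV : ∀ i, EuclideanSpace.single i 1 ∈ aePeriods volume V) (x : EuclideanSpace ℝ (Fin d)) :
    ∫ ξ in cube d 1, V (x + ξ) = ∫ ξ in cube d 1, V ξ := by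
  set b := (EuclideanSpace.basisFun (Fin d) ℝ).toBasis
  calc ∫ ξ in cube d 1, V (x + ξ) = ∫ ξ in ZSpan.fundamentalDomain b, V (x + ξ) :=
        setIntegral_congr_set cube_one_ae_eq_fundamentalDomain
    _ = ∫ y in x +ᵥ ZSpan.fundamentalDomain b, V y := setIntegral_comp_add_left V x _
    _ = ∫ y in ZSpan.fundamentalDomain b, V y :=
        setIntegral_vadd_fundamentalDomain b (by simpa [b] using hV) x
    _ = ∫ ξ in cube d 1, V ξ := setIntegral_congr_set cube_one_ae_eq_fundamentalDomain.symm

variable [CompleteSpace F]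

theorem setIntegral_cube_one_comp_add_eq_apply (hv : LocallyIntegrable v volume)
    (hper : ∀ i, EuclideanSpace.single i 1 ∈ aePeriods volume (fun x => v x - M x))
    (hmean : ∫ x in cube d 1, v x = 0) (x : EuclideanSpace ℝ (Fin d)) :
    ∫ ξ in cube d 1, v (x + ξ) = M x := by
  have hM : LocallyIntegrable M volume := M.continuous.locallyIntegrable
  have hperiodic := setIntegral_cube_one_comp_add hper x
  rw [integral_sub (hv.integrableOn_comp_add_left x isBounded_cube)
      (hM.integrableOn_comp_add_left x isBounded_cube),
    integral_sub (hv.integrableOn_of_isBounded isBounded_cube)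
      (hM.integrableOn_of_isBounded isBounded_cube), hmean] at hperiodic
  simp only [map_add] at hperiodic
  rw [integral_add (integrable_const _) (hM.integrableOn_of_isBounded isBounded_cube),
    integral_const, probReal_univ, one_smul] at hperiodic
  linear_combination (norm := module) hperiodic

theorem norm_sub_apply_rpow_le_integral_cube_one (hv : StronglyMeasurable v) (hp : 1 ≤ p)
    (hloc : LocallyIntegrable (fun x => ‖v x‖ ^ p) volume)
    (hper : ∀ i, EuclideanSpace.single i 1 ∈ aePeriods volume (fun x => v x - M x))
    (hmean : ∫ x in cube d 1, v x = 0) (x : EuclideanSpace ℝ (Fin d)) :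
    ‖v x - M x‖ ^ p ≤ ∫ ξ in cube d 1, ‖v (x + ξ) - v x‖ ^ p := by
  have hvloc := hloc.of_norm_rpow hp hv.aestronglyMeasurable
  have htr := hvloc.integrableOn_comp_add_left x (isBounded_cube (r := 1))
  have hmean_shift : v x - M x = -∫ ξ in cube d 1, (v (x + ξ) - v x) := by
    rw [integral_sub htr (integrable_const _), integral_const, probReal_univ, one_smul,
      setIntegral_cube_one_comp_add_eq_apply hvloc hper hmean x, neg_sub]
  rw [hmean_shift, norm_neg]
  refine norm_integral_rpow_le hp (htr.sub (integrable_const _)) ?_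
  exact (hloc.integrableOn_comp_add_left x isBounded_cube).norm_sub_rpow hp
    (hv.comp_measurable (measurable_const_add x)).aestronglyMeasurable
    aestronglyMeasurable_const (integrable_const _)

theorem integral_cube_one_norm_sub_rpow_le (hv : StronglyMeasurable v) (hp : 1 ≤ p)
    (hloc : LocallyIntegrable (fun x => ‖v x‖ ^ p) volume)
    (hper : ∀ i, EuclideanSpace.single i 1 ∈ aePeriods volume (fun x => v x - M x))
    (hmean : ∫ x in cube d 1, v x = 0) :
    ∫ x in cube d 1, ‖v x - M x‖ ^ p
      ≤ ∫ ξ in cube d 1, ∫ x in cube d 1, ‖v (x + ξ) - v x‖ ^ p := by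
  have hK := integrable_norm_sub_rpow_prod hv hp hloc (isBounded_cube (r := 1))
    (isBounded_cube (r := 1)) (measurableSet_cube (r := 1))
  calc ∫ x in cube d 1, ‖v x - M x‖ ^ p
      ≤ ∫ x in cube d 1, ∫ ξ in cube d 1, ‖v (x + ξ) - v x‖ ^ p :=
        integral_mono_of_nonneg (ae_of_all _ fun _ => by positivity) hK.integral_prod_left
          (ae_of_all _ (norm_sub_apply_rpow_le_integral_cube_one hv hp hloc hper hmean))
    _ = ∫ ξ in cube d 1, ∫ x in cube d 1, ‖v (x + ξ) - v x‖ ^ p := integral_integral_swap hK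

end Poincare

section Scaling

variable {d : ℕ} {F : Type*} [NormedAddCommGroup F] [NormedSpace ℝ F] {p t r : ℝ}

theorem setIntegral_cube_one_le_of_inv_le {g : EuclideanSpace ℝ (Fin d) → ℝ} (hg0 : 0 ≤ g)
    (ht : 0 < t) (hr : t⁻¹ ≤ r) (hg : IntegrableOn (fun ξ => g (t • ξ)) (cube d r)) :
    ∫ ξ in cube d 1, g ξ ≤ t ^ d * ∫ ξ in cube d r, g (t • ξ) := by
  have hscale : ∫ ξ in cube d t⁻¹, g (t • ξ) = (t ^ d)⁻¹ * ∫ ξ in cube d 1, g ξ := by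
    rw [Measure.setIntegral_comp_smul_of_pos _ _ _ ht, smul_cube ht, mul_inv_cancel₀ ht.ne',
      finrank_euclideanSpace_fin, smul_eq_mul]
  calc ∫ ξ in cube d 1, g ξ = t ^ d * ∫ ξ in cube d t⁻¹, g (t • ξ) := by
        rw [hscale, mul_inv_cancel_left₀ (by positivity)]
    _ ≤ t ^ d * ∫ ξ in cube d r, g (t • ξ) := by
        refine mul_le_mul_of_nonneg_left ?_ (by positivity)
        exact setIntegral_mono_set hg (ae_of_all _ fun ξ => hg0 (t • ξ))
          (cube_mono hr).eventuallyLE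

theorem integral_cube_one_norm_sub_rpow_le_energy {v : EuclideanSpace ℝ (Fin d) → F}
    (hv : StronglyMeasurable v) (hp : 1 ≤ p)
    (hloc : LocallyIntegrable (fun x => ‖v x‖ ^ p) volume) (ht : 0 < t) (hr : t⁻¹ ≤ r) :
    ∫ ξ in cube d 1, ∫ x in cube d 1, ‖v (x + ξ) - v x‖ ^ p
      ≤ t ^ ((d : ℝ) + p) *
        ∫ ξ in cube d r, ∫ x in cube d 1, ‖t⁻¹ • (v (x + t • ξ) - v x)‖ ^ p := by
  set g := fun ξ => ∫ x in cube d 1, ‖v (x + ξ) - v x‖ ^ p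
  have hg0 : 0 ≤ g := fun _ => integral_nonneg fun _ => by positivity
  have hg_bdd : ∀ ξ ∈ cube d r, ‖g (t • ξ)‖ ≤ 2 ^ (p - 1) *
      ((∫ y in cube d (t * r) + cube d 1, ‖v y‖ ^ p) + ∫ x in cube d 1, ‖v x‖ ^ p) := by
    intro ξ hξ
    rw [Real.norm_of_nonneg (hg0 _)]
    refine integral_norm_sub_rpow_comp_add_le hp hloc isBounded_cube isBounded_cube ?_
    rw [← smul_cube ht]
    exact smul_mem_smul_set hξ
  have hg_int : IntegrableOn (fun ξ => g (t • ξ)) (cube d r) :=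
    Measure.integrableOn_of_bounded isBounded_cube.measure_lt_top.ne
      ((stronglyMeasurable_norm_sub_rpow_prod hv (by linarith)).integral_prod_left'
        |>.comp_measurable (measurable_const_smul t)).aestronglyMeasurable
      (ae_restrict_of_forall_mem measurableSet_cube hg_bdd)
  have hhomog : ∀ ξ,
      ∫ x in cube d 1, ‖t⁻¹ • (v (x + t • ξ) - v x)‖ ^ p = t⁻¹ ^ p * g (t • ξ) := by
    intro ξ
    rw [← integral_const_mul]
    congr with x
    rw [norm_smul, Real.mul_rpow (by positivity) (norm_nonneg _),
      Real.norm_of_nonneg (by positivity)]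
  calc ∫ ξ in cube d 1, g ξ ≤ t ^ d * ∫ ξ in cube d r, g (t • ξ) :=
        setIntegral_cube_one_le_of_inv_le hg0 ht hr hg_int
    _ = t ^ ((d : ℝ) + p) * ∫ ξ in cube d r, t⁻¹ ^ p * g (t • ξ) := by
        rw [integral_const_mul, ← mul_assoc, Real.rpow_add ht, Real.rpow_natCast,
          mul_assoc (t ^ d), ← Real.mul_rpow ht.le (by positivity), mul_inv_cancel₀ ht.ne',
          Real.one_rpow, mul_one]
    _ = _ := by simp only [hhomog]

end Scaling

theorem integral_cube_one_norm_apply_rpow_le {d : ℕ} {F : Type*} [NormedAddCommGroup F]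
    [NormedSpace ℝ F] {p : ℝ} (M : EuclideanSpace ℝ (Fin d) →L[ℝ] F) (hp : 0 ≤ p) :
    ∫ x in cube d 1, ‖M x‖ ^ p ≤ d ^ (p / 2) * ‖M‖ ^ p := by
  have hbound : ∀ x ∈ cube d 1, ‖M x‖ ^ p ≤ d ^ (p / 2) * ‖M‖ ^ p := fun x hx =>
    calc ‖M x‖ ^ p ≤ (√d * ‖M‖) ^ p := by
          gcongr
          calc ‖M x‖ ≤ ‖M‖ * ‖x‖ := M.le_opNorm x
            _ ≤ ‖M‖ * (√d * 1) := by gcongr; exact norm_le_of_mem_cube hx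
            _ = √d * ‖M‖ := by ring
      _ = d ^ (p / 2) * ‖M‖ ^ p := by
          rw [Real.mul_rpow (by positivity) (norm_nonneg _), Real.sqrt_eq_rpow,
            ← Real.rpow_mul (Nat.cast_nonneg _), one_div_mul_eq_div]
  calc ∫ x in cube d 1, ‖M x‖ ^ p ≤ ∫ x in cube d 1, (d : ℝ) ^ (p / 2) * ‖M‖ ^ p :=
        integral_mono_of_nonneg (ae_of_all _ fun _ => by positivity) (integrable_const _)
          (ae_restrict_of_forall_mem measurableSet_cube hbound)
    _ = d ^ (p / 2) * ‖M‖ ^ p := by rw [integral_const, probReal_univ, one_smul]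

theorem stmt3_general (d m : ℕ) (p : ℝ) (hp : 1 < p)
    (M : EuclideanSpace ℝ (Fin d) →L[ℝ] EuclideanSpace ℝ (Fin m))
    (lam : ℝ) (hlam : 0 < lam)
    (lamSeq : ℕ → ℝ) (hlamSeq : ∀ j, lam / 2 ≤ lamSeq j ∧ lamSeq j ≤ 2 * lam)
    (u : ℕ → EuclideanSpace ℝ (Fin d) → EuclideanSpace ℝ (Fin m))
    (hu : ∀ j, Measurable (u j))
    (hloc : ∀ j, ∀ K : Set (EuclideanSpace ℝ (Fin d)), IsCompact K →
      IntegrableOn (fun x => ‖u j x‖ ^ p) K volume)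
    (hper : ∀ j, ∀ i : Fin d, ∀ᵐ x : EuclideanSpace ℝ (Fin d),
      u j (x + EuclideanSpace.single i (1:ℝ)) - M (x + EuclideanSpace.single i (1:ℝ))
        = u j x - M x)
    (Q1 : Set (EuclideanSpace ℝ (Fin d)))
    (hQ1 : Q1 = {x | ∀ i, x i ∈ Set.Ioo (0:ℝ) 1})
    (Qbig : Set (EuclideanSpace ℝ (Fin d)))
    (hQbig : Qbig = {x | ∀ i, x i ∈ Set.Ioo (0:ℝ) (2 / lam)})
    (hmean : ∀ j, ∫ x in Q1, u j x = 0)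
    (S : ℝ)
    (hS : ∀ j, (∫ ξ in Qbig, ∫ x in Q1,
        ‖(lamSeq j)⁻¹ • (u j (x + lamSeq j • ξ) - u j x)‖ ^ p) ≤ S) :
    ∀ j, (∫ x in Q1, ‖u j x‖ ^ p)
      ≤ (2:ℝ) ^ (p - 1) *
        ((2 * lam) ^ ((d : ℝ) + p) * S + (d : ℝ) ^ (p / 2) * ‖M‖ ^ p) := by
  intro j
  obtain rfl : Q1 = cube d 1 := hQ1
  obtain rfl : Qbig = cube d (2 / lam) := hQbig
  obtain ⟨hlo, hhi⟩ := hlamSeq j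
  have ht : 0 < lamSeq j := by linarith
  have hinv : (lamSeq j)⁻¹ ≤ 2 / lam := by
    rw [inv_le_comm₀ ht (by positivity), inv_div]
    linarith
  have hv := (hu j).stronglyMeasurable
  have hlocj : LocallyIntegrable (fun x => ‖u j x‖ ^ p) volume := locallyIntegrable_iff.2 (hloc j)
  have hMp : IntegrableOn (fun x => ‖M x‖ ^ p) (cube d 1) :=
    (M.continuous.norm.rpow_const fun _ => Or.inr (by linarith)).locallyIntegrable
      |>.integrableOn_of_isBounded isBounded_cube
  calc ∫ x in cube d 1, ‖u j x‖ ^ p = ∫ x in cube d 1, ‖(u j x - M x) + M x‖ ^ p := by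
        simp only [sub_add_cancel]
    _ ≤ 2 ^ (p - 1) * ((∫ x in cube d 1, ‖u j x - M x‖ ^ p) + ∫ x in cube d 1, ‖M x‖ ^ p) :=
        integral_norm_add_rpow_le hp.le
          ((hlocj.integrableOn_of_isBounded isBounded_cube).norm_sub_rpow hp.le
            hv.aestronglyMeasurable M.continuous.aestronglyMeasurable hMp) hMp
    _ ≤ 2 ^ (p - 1) * ((2 * lam) ^ ((d : ℝ) + p) * S + (d : ℝ) ^ (p / 2) * ‖M‖ ^ p) := by
        gcongr 2 ^ (p - 1) * (?_ + ?_)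
        · calc ∫ x in cube d 1, ‖u j x - M x‖ ^ p
              ≤ ∫ ξ in cube d 1, ∫ x in cube d 1, ‖u j (x + ξ) - u j x‖ ^ p :=
                integral_cube_one_norm_sub_rpow_le hv hp.le hlocj (hper j) (hmean j)
            _ ≤ lamSeq j ^ ((d : ℝ) + p) * ∫ ξ in cube d (2 / lam), ∫ x in cube d 1,
                  ‖(lamSeq j)⁻¹ • (u j (x + lamSeq j • ξ) - u j x)‖ ^ p :=
                integral_cube_one_norm_sub_rpow_le_energy hv hp.le hlocj ht hinv
            _ ≤ (2 * lam) ^ ((d : ℝ) + p) * S := by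
                gcongr
                exact hS j
        · exact integral_cube_one_norm_apply_rpow_le M (by linarith)

/-- uniform `L^p(Q₁)` bound for a sequence with equi-bounded
non-local energies in the critical regime. -/
theorem stmt3 (d m : ℕ) (hd : 1 ≤ d) (hm : 1 ≤ m) (p : ℝ) (hp : 1 < p)
    (M : EuclideanSpace ℝ (Fin d) →L[ℝ] EuclideanSpace ℝ (Fin m))
    (lam : ℝ) (hlam : 0 < lam)
    (lamSeq : ℕ → ℝ) (hlamSeq : ∀ j, lam / 2 ≤ lamSeq j ∧ lamSeq j ≤ 2 * lam)
    (u : ℕ → EuclideanSpace ℝ (Fin d) → EuclideanSpace ℝ (Fin m))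
    (hu : ∀ j, Measurable (u j))
    (hloc : ∀ j, ∀ K : Set (EuclideanSpace ℝ (Fin d)), IsCompact K →
      IntegrableOn (fun x => ‖u j x‖ ^ p) K volume)
    (hper : ∀ j, ∀ i : Fin d, ∀ᵐ x : EuclideanSpace ℝ (Fin d),
      u j (x + EuclideanSpace.single i (1:ℝ)) - M (x + EuclideanSpace.single i (1:ℝ))
        = u j x - M x)
    (Q1 : Set (EuclideanSpace ℝ (Fin d)))
    (hQ1 : Q1 = {x | ∀ i, x i ∈ Set.Ioo (0:ℝ) 1})
    (Qbig : Set (EuclideanSpace ℝ (Fin d)))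
    (hQbig : Qbig = {x | ∀ i, x i ∈ Set.Ioo (0:ℝ) (2 / lam)})
    (hmean : ∀ j, ∫ x in Q1, u j x = 0)
    (S : ℝ)
    (hS : ∀ j, (∫ ξ in Qbig, ∫ x in Q1,
        ‖(lamSeq j)⁻¹ • (u j (x + lamSeq j • ξ) - u j x)‖ ^ p) ≤ S) :
    ∀ j, (∫ x in Q1, ‖u j x‖ ^ p)
      ≤ (2:ℝ) ^ (p - 1) *
        ((2 * lam) ^ ((d : ℝ) + p) * S + (d : ℝ) ^ (p / 2) * ‖M‖ ^ p) :=
  stmt3_general d m p hp M lam hlam lamSeq hlamSeq u hu hloc hper Q1 hQ1 Qbig hQbig hmean S hS
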